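/- The matrix M defined in the coupled TPBVP (with blocks −Â, S_i, Q_i, Â^⊤ as above) is defective: the geometric multiplicity of its zero eigenvalue is m(m−1), strictly less than its algebraic multiplicity 2m(m−1) (for m ≥ 2). -/

import Mathlib

open Matrix Kronecker Polynomial

/-- `Â = [[0,1],[0,0]] ⊗ I_m`. -/
noncomputable def AhatM (m : ℕ) : Matrix (Fin 2 × Fin m) (Fin 2 × Fin m) ℝ :=
  !![(0:ℝ),1;0,0] ⊗ₖ (1 : Matrix (Fin m) (Fin m) ℝ)

/-- `S_i = [[0,0],[0,1]] ⊗ (1/r_i) b_i b_iᵀ`. -/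
noncomputable def SM (m : ℕ) (r : Fin m → ℝ) (i : Fin m) :
    Matrix (Fin 2 × Fin m) (Fin 2 × Fin m) ℝ :=
  !![(0:ℝ),0;0,1] ⊗ₖ ((1 / r i) • Matrix.single i i (1:ℝ))

/-- `Q_i = [[1,τ],[τ,τ²+1]] ⊗ diag(0,…,μ_i,…,0)`. -/
noncomputable def QM (m : ℕ) (μ : Fin m → ℝ) (τ : ℝ) (i : Fin m) :
    Matrix (Fin 2 × Fin m) (Fin 2 × Fin m) ℝ :=
  !![(1:ℝ), τ; τ, τ^2+1] ⊗ₖ Matrix.diagonal (fun j => if j = i then μ i else 0)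

/-- The TPBVP block matrix `M`, indexed with `Option (Fin m)` for the `m+1` block
rows/columns (`none` is the first block), each block of size `2m`. -/
noncomputable def MM (m : ℕ) (r μ : Fin m → ℝ) (τ : ℝ) :
    Matrix (Option (Fin m) × (Fin 2 × Fin m)) (Option (Fin m) × (Fin 2 × Fin m)) ℝ :=
  fun p q =>
    match p.1, q.1 with
    | none, none => (-(AhatM m)) p.2 q.2
    | none, some j => SM m r j p.2 q.2
    | some i, none => QM m μ τ i p.2 q.2
    | some i, some j => if i = j then (AhatM m)ᵀ p.2 q.2 else 0

/-!
Reorder the coordinates of `M`. A coordinate `(some i, (a, j))` with `j ≠ i` is reached only by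
the `Â^⊤` block of block row `i`, so in the new order `M` is block upper triangular. Its first
diagonal block acts on these `2m(m-1)` coordinates as the nilpotent `[[0, 0], [1, 0]]` pattern,
with kernel of dimension `m(m-1)` and characteristic polynomial `X ^ (2m(m-1))`. The second is
block diagonal: the four coordinates `(none, (a, i))`, `(some i, (a, i))` form a `4 × 4` block
of determinant `μ i / r i ≠ 0`. An invertible lower diagonal block changes neither the kernel
nor the multiplicity of the root `0`.
-/

namespace Matrix

section Kernel

variable {R : Type*} [CommRing R] {n o : Type*} [Fintype n] [Fintype o]

theorem fromBlocks_zero₂₁_mulVec_eq_zero_iff {A : Matrix n n R} (B : Matrix n o R)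
    {D : Matrix o o R} (hD : Function.Injective D.mulVec) (v : n ⊕ o → R) :
    fromBlocks A B 0 D *ᵥ v = 0 ↔ A *ᵥ (v ∘ Sum.inl) = 0 ∧ v ∘ Sum.inr = 0 := by
  rw [fromBlocks_mulVec, ← Sum.elim_zero_zero, Sum.elim_eq_iff, zero_mulVec, zero_add,
    hD.eq_iff' (mulVec_zero D)]
  constructor
  · rintro ⟨hA, hv⟩
    simpa [hv] using hA
  · rintro ⟨hA, hv⟩
    simp [hA, hv]

def kerFromBlocksZero₂₁Equiv (A : Matrix n n R) (B : Matrix n o R) {D : Matrix o o R}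
    (hD : Function.Injective D.mulVec) :
    LinearMap.ker (fromBlocks A B 0 D).mulVecLin ≃ₗ[R] LinearMap.ker A.mulVecLin where
  toFun v := ⟨v.1 ∘ Sum.inl,
    ((fromBlocks_zero₂₁_mulVec_eq_zero_iff B hD _).1 (LinearMap.mem_ker.1 v.2)).1⟩
  map_add' _ _ := rfl
  map_smul' _ _ := rfl
  invFun x := ⟨Sum.elim x.1 0,
    (fromBlocks_zero₂₁_mulVec_eq_zero_iff B hD _).2 ⟨LinearMap.mem_ker.1 x.2, rfl⟩⟩
  left_inv v := by
    have hv := ((fromBlocks_zero₂₁_mulVec_eq_zero_iff B hD _).1 (LinearMap.mem_ker.1 v.2)).2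
    ext (i | j)
    · rfl
    · exact (congrFun hv j).symm
  right_inv _ := rfl

theorem finrank_ker_fromBlocks_zero₂₁ (A : Matrix n n R) (B : Matrix n o R) {D : Matrix o o R}
    (hD : Function.Injective D.mulVec) :
    Module.finrank R (LinearMap.ker (fromBlocks A B 0 D).mulVecLin) =
      Module.finrank R (LinearMap.ker A.mulVecLin) :=
  (kerFromBlocksZero₂₁Equiv A B hD).finrank_eq

theorem finrank_ker_mulVecLin_reindex {m : Type*} [Fintype m] (e : n ≃ m) (A : Matrix n n R) :
    Module.finrank R (LinearMap.ker (reindex e e A).mulVecLin) =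
      Module.finrank R (LinearMap.ker A.mulVecLin) := by
  rw [mulVecLin_reindex, LinearEquiv.ker_comp, LinearMap.ker_comp,
    Submodule.comap_equiv_eq_map_symm, LinearEquiv.finrank_map_eq]

end Kernel

theorem finrank_ker_fromBlocks_zero_zero_one_zero {R : Type*} [Field R] (ι : Type*) [Fintype ι]
    [DecidableEq ι] :
    Module.finrank R (LinearMap.ker (fromBlocks 0 0 1 0 : Matrix (ι ⊕ ι) (ι ⊕ ι) R).mulVecLin) =
      Fintype.card ι := by
  have hker : LinearMap.ker (fromBlocks 0 0 1 0 : Matrix (ι ⊕ ι) (ι ⊕ ι) R).mulVecLin =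
      LinearMap.ker (LinearMap.funLeft R R Sum.inl) := by
    ext v
    simp [fromBlocks_mulVec, ← Sum.elim_zero_zero, Sum.elim_eq_iff, LinearMap.funLeft]
  have hrank :=
    LinearMap.finrank_range_add_finrank_ker (LinearMap.funLeft R R (Sum.inl : ι → ι ⊕ ι))
  rw [LinearMap.range_eq_top.2 (LinearMap.funLeft_surjective_of_injective _ _ _ Sum.inl_injective),
    finrank_top, Module.finrank_fintype_fun_eq_card, Module.finrank_fintype_fun_eq_card,
    Fintype.card_sum] at hrank
  rw [hker]
  omega

theorem rootMultiplicity_zero_charpoly_fromBlocks_zero₂₁ {R : Type*} [CommRing R] [IsDomain R]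
    {n o : Type*} [Fintype n] [Fintype o] [DecidableEq n] [DecidableEq o]
    (A : Matrix n n R) (B : Matrix n o R) {D : Matrix o o R} (hD : D.det ≠ 0) :
    (fromBlocks A B 0 D).charpoly.rootMultiplicity 0 = A.charpoly.rootMultiplicity 0 := by
  have hD0 : ¬ D.charpoly.IsRoot 0 := by
    rw [IsRoot, ← coeff_zero_eq_eval_zero]
    intro h
    apply hD
    rw [det_eq_sign_charpoly_coeff, h, mul_zero]
  rw [charpoly_fromBlocks_zero₂₁, rootMultiplicity_mul (mul_ne_zero A.charpoly_monic.ne_zero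
    D.charpoly_monic.ne_zero), rootMultiplicity_eq_zero hD0, add_zero]

end Matrix

section Entries

variable {m : ℕ} (r μ : Fin m → ℝ) (τ : ℝ)

theorem MM_apply_none_none (a b : Fin 2) (j k : Fin m) :
    MM m r μ τ (none, (a, j)) (none, (b, k)) = if a = 0 ∧ b = 1 ∧ j = k then -1 else 0 := by
  fin_cases a <;> fin_cases b <;> simp [MM, AhatM, one_apply, apply_ite]

theorem MM_apply_none_some (a b : Fin 2) (j i k : Fin m) :
    MM m r μ τ (none, (a, j)) (some i, (b, k)) =
      if a = 1 ∧ b = 1 ∧ j = i ∧ k = i then 1 / r i else 0 := by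
  fin_cases a <;> fin_cases b <;> simp [MM, SM, single, eq_comm, and_comm]

theorem MM_apply_some_none (a b : Fin 2) (i j k : Fin m) :
    MM m r μ τ (some i, (a, j)) (none, (b, k)) =
      if j = i ∧ k = i then !![(1:ℝ), τ; τ, τ ^ 2 + 1] a b * μ i else 0 := by
  by_cases hj : j = i <;> by_cases hk : k = i <;> simp_all [MM, QM, diagonal_apply, eq_comm]

theorem MM_apply_some_some (a b : Fin 2) (i j i' k : Fin m) :
    MM m r μ τ (some i, (a, j)) (some i', (b, k)) =
      if i = i' ∧ j = k ∧ a = 1 ∧ b = 0 then 1 else 0 := by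
  fin_cases a <;> fin_cases b <;> simp [MM, AhatM, one_apply, ite_and, eq_comm]

end Entries

abbrev OffDiag (m : ℕ) := {p : Fin m × Fin m // p.1 ≠ p.2}

theorem card_offDiag (m : ℕ) : Fintype.card (OffDiag m) = m * (m - 1) := by
  rw [Fintype.card_subtype, Nat.mul_sub_one]
  convert (Finset.univ : Finset (Fin m)).offDiag_card using 2 <;> simp [Finset.ext_iff]

def blockEquiv (m : ℕ) :
    Option (Fin m) × (Fin 2 × Fin m) ≃ (OffDiag m ⊕ OffDiag m) ⊕ (Fin (2 + 2) × Fin m) where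
  toFun
    | (none, (a, j)) => .inr (Fin.castAdd 2 a, j)
    | (some i, (a, j)) =>
      if h : i = j then .inr (Fin.natAdd 2 a, i)
      else .inl (if a = 0 then .inl ⟨(i, j), h⟩ else .inr ⟨(i, j), h⟩)
  invFun
    | .inl (.inl p) => (some p.1.1, (0, p.1.2))
    | .inl (.inr p) => (some p.1.1, (1, p.1.2))
    | .inr (k, i) => Fin.addCases (fun a => (none, (a, i))) (fun a => (some i, (a, i))) k
  left_inv
    | (none, (a, j)) => by simp
    | (some i, (a, j)) => by
      by_cases h : i = j
      · subst h
        simp [-Fin.natAdd_eq_addNat]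
      · fin_cases a <;> simp [h]
  right_inv
    | .inl (.inl ⟨(i, j), h⟩) => by simp [h]
    | .inl (.inr ⟨(i, j), h⟩) => by simp [h]
    | .inr (k, i) => by induction k using Fin.addCases <;> simp [-Fin.natAdd_eq_addNat]

noncomputable def couplingBlock {m : ℕ} (r μ : Fin m → ℝ) (τ : ℝ) (i : Fin m) :
    Matrix (Fin 4) (Fin 4) ℝ :=
  !![0, -1, 0, 0;
     0, 0, 0, 1 / r i;
     μ i, τ * μ i, 0, 0;
     τ * μ i, (τ ^ 2 + 1) * μ i, 1, 0]

theorem det_couplingBlock {m : ℕ} (r μ : Fin m → ℝ) (τ : ℝ) (i : Fin m) :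
    (couplingBlock r μ τ i).det = μ i / r i := by
  simp [couplingBlock, det_succ_row_zero, Fin.sum_univ_succ, Fin.succAbove, div_eq_inv_mul]

section Blocks

variable {m : ℕ} (r μ : Fin m → ℝ) (τ : ℝ)

theorem toBlocks₁₁_reindex_MM :
    (reindex (blockEquiv m) (blockEquiv m) (MM m r μ τ)).toBlocks₁₁ = fromBlocks 0 0 1 0 := by
  ext (⟨⟨i, j⟩, h⟩ | ⟨⟨i, j⟩, h⟩) (⟨⟨i', j'⟩, h'⟩ | ⟨⟨i', j'⟩, h'⟩) <;>
    simp [toBlocks₁₁, blockEquiv, MM_apply_some_some, one_apply]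

theorem toBlocks₂₁_reindex_MM :
    (reindex (blockEquiv m) (blockEquiv m) (MM m r μ τ)).toBlocks₂₁ = 0 := by
  ext ⟨k, i⟩ (⟨⟨i', j'⟩, h'⟩ | ⟨⟨i', j'⟩, h'⟩) <;> induction k using Fin.addCases <;>
    simp only [toBlocks₂₁, blockEquiv, reindex_apply, Equiv.symm_mk, Equiv.coe_fn_mk,
      submatrix_apply, of_apply, Fin.addCases_left, Fin.addCases_right, MM_apply_none_some,
      MM_apply_some_some, Matrix.zero_apply] <;>
    grind

theorem toBlocks₂₂_reindex_MM :
    (reindex (blockEquiv m) (blockEquiv m) (MM m r μ τ)).toBlocks₂₂ =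
      blockDiagonal (couplingBlock r μ τ) := by
  ext ⟨k, i⟩ ⟨l, i'⟩
  rcases eq_or_ne i i' with rfl | hii
  · induction k using Fin.addCases <;> induction l using Fin.addCases <;> rename_i a b <;>
      simp only [toBlocks₂₂, blockEquiv, of_apply, reindex_apply, submatrix_apply,
        Equiv.coe_fn_symm_mk, Fin.addCases_left, Fin.addCases_right, blockDiagonal_apply_eq,
        MM_apply_some_some, MM_apply_none_some, MM_apply_none_none, MM_apply_some_none] <;>
      fin_cases a <;> fin_cases b <;> simp [couplingBlock]
  · induction k using Fin.addCases <;> induction l using Fin.addCases <;>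
      simp [toBlocks₂₂, blockEquiv, MM_apply_some_some, MM_apply_none_some, MM_apply_none_none,
        MM_apply_some_none, blockDiagonal_apply, -Fin.natAdd_eq_addNat, hii, hii.symm]

theorem reindex_MM_eq_fromBlocks :
    reindex (blockEquiv m) (blockEquiv m) (MM m r μ τ) =
      fromBlocks (fromBlocks 0 0 1 0)
        (reindex (blockEquiv m) (blockEquiv m) (MM m r μ τ)).toBlocks₁₂
        0 (blockDiagonal (couplingBlock r μ τ)) := by
  conv_lhs => rw [← fromBlocks_toBlocks (reindex (blockEquiv m) (blockEquiv m) (MM m r μ τ))]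
  rw [toBlocks₁₁_reindex_MM, toBlocks₂₁_reindex_MM, toBlocks₂₂_reindex_MM]

end Blocks

/-- `M` is defective: the geometric multiplicity `m(m−1)` of the eigenvalue `0` is
strictly less than its algebraic multiplicity `2m(m−1)` (for `m ≥ 2`). -/
theorem MM_defective (m : ℕ) (hm : 2 ≤ m) (r μ : Fin m → ℝ) (τ : ℝ)
    (hr : ∀ i, 0 < r i) (hμ : ∀ i, 0 < μ i) :
    Module.finrank ℝ (LinearMap.ker (Matrix.mulVecLin (MM m r μ τ))) = m * (m - 1) ∧
    (MM m r μ τ).charpoly.rootMultiplicity 0 = 2 * m * (m - 1) ∧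
    m * (m - 1) < 2 * m * (m - 1) := by
  have hD : (blockDiagonal (couplingBlock r μ τ)).det ≠ 0 := by
    rw [det_blockDiagonal, Finset.prod_ne_zero_iff]
    intro i _
    rw [det_couplingBlock]
    exact div_ne_zero (hμ i).ne' (hr i).ne'
  have hM := reindex_MM_eq_fromBlocks r μ τ
  refine ⟨?_, ?_, ?_⟩
  · rw [← finrank_ker_mulVecLin_reindex (blockEquiv m), hM, finrank_ker_fromBlocks_zero₂₁ _ _
      (mulVec_injective_iff_isUnit.2 ((isUnit_iff_isUnit_det _).2 hD.isUnit)),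
      finrank_ker_fromBlocks_zero_zero_one_zero, card_offDiag]
  · rw [← charpoly_reindex (blockEquiv m), hM,
      rootMultiplicity_zero_charpoly_fromBlocks_zero₂₁ _ _ hD, charpoly_fromBlocks_zero₁₂,
      charpoly_zero, ← pow_add, card_offDiag, ← two_mul, ← mul_assoc]
    simpa using rootMultiplicity_X_sub_C_pow (0 : ℝ) (2 * m * (m - 1))
  · have hpos : 0 < m * (m - 1) := Nat.mul_pos (by omega) (by omega)
    rw [mul_assoc]
    exact lt_two_mul_self hpos
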